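/- Let 0 < α < 2/3 and let S_1, ..., S_b be k-element subsets of [m] whose union is [m]. Then for every nonzero M' ∈ ℝ^{n×m} with J̄_n M' = 0, we have ‖M' Q^{S_1} Q^{S_2} ⋯ Q^{S_b}‖ < ‖M'‖ in Frobenius norm, where Q^S = I_m - α D^S - (α/k) δ^S (δ^S)^⊤. -/

import Mathlib

open Matrix BigOperators

/-- Frobenius norm `‖M‖ = Tr(Mᵀ M)^{1/2}`. -/
noncomputable def frob {a b : ℕ} (M : Matrix (Fin a) (Fin b) ℝ) : ℝ :=
  Real.sqrt (Matrix.trace (Mᵀ * M))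

/-- The matrix `J̄_n = (1/n) J_n`, where `J_n` is the all-ones matrix. -/
noncomputable def Jbar (n : ℕ) : Matrix (Fin n) (Fin n) ℝ :=
  ((n : ℝ))⁻¹ • Matrix.of fun _ _ => (1 : ℝ)

/-- Indicator column vector of `S ⊆ [m]`. -/
def dvec {m : ℕ} (S : Finset (Fin m)) : Matrix (Fin m) (Fin 1) ℝ :=
  Matrix.of fun j _ => if j ∈ S then 1 else 0

/-- Diagonal 0/1 matrix indicating `S ⊆ [m]`. -/
def Dmat {m : ℕ} (S : Finset (Fin m)) : Matrix (Fin m) (Fin m) ℝ :=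
  Matrix.diagonal fun j => if j ∈ S then 1 else 0

/-- The matrix `Q^S = I_m - α D^S - (α/k) δ^S (δ^S)ᵀ`. -/
noncomputable def Qmat {m : ℕ} (S : Finset (Fin m)) (α : ℝ) (k : ℕ) :
    Matrix (Fin m) (Fin m) ℝ :=
  1 - α • Dmat S - (α / (k : ℝ)) • (dvec S * (dvec S)ᵀ)

noncomputable def norm2 {a b : ℕ} (M : Matrix (Fin a) (Fin b) ℝ) : ℝ :=
  ∑ i, ∑ j, (M i j) ^ 2

lemma norm2_nonneg {a b : ℕ} (M : Matrix (Fin a) (Fin b) ℝ) : 0 ≤ norm2 M :=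
  Finset.sum_nonneg fun _ _ => Finset.sum_nonneg fun _ _ => sq_nonneg _

lemma norm2_pos {a b : ℕ} (M : Matrix (Fin a) (Fin b) ℝ) (h : M ≠ 0) : 0 < norm2 M := by
  rcases lt_or_eq_of_le (norm2_nonneg M) with h' | h'
  · exact h'
  · exfalso; apply h
    have h0 : ∀ i ∈ Finset.univ, ∑ j, (M i j)^2 = 0 := by
      exact (Finset.sum_eq_zero_iff_of_nonneg
        (fun i _ => Finset.sum_nonneg fun j _ => sq_nonneg (M i j))).1 h'.symm
    ext i j
    have := (Finset.sum_eq_zero_iff_of_nonneg (fun j _ => sq_nonneg (M i j))).1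
      (h0 i (Finset.mem_univ i)) j (Finset.mem_univ j)
    simpa using pow_eq_zero_iff (n := 2) (by norm_num) |>.1 this

lemma frob_eq {a b : ℕ} (M : Matrix (Fin a) (Fin b) ℝ) :
    frob M = Real.sqrt (norm2 M) := by
  unfold frob norm2
  congr 1
  rw [Matrix.trace]
  simp only [Matrix.diag, Matrix.mul_apply, Matrix.transpose_apply]
  rw [Finset.sum_comm]
  simp [sq]

lemma mul_Dmat_apply {a m : ℕ} (S : Finset (Fin m)) (M : Matrix (Fin a) (Fin m) ℝ)
    (i : Fin a) (j : Fin m) :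
    (M * Dmat S) i j = if j ∈ S then M i j else 0 := by
  rw [Dmat, Matrix.mul_diagonal]
  split <;> simp

lemma mul_Q_eq {a m : ℕ} (S : Finset (Fin m)) (α : ℝ) (k : ℕ)
    (M : Matrix (Fin a) (Fin m) ℝ) :
    M * Qmat S α k = M - α • (M * Dmat S) - (α / (k : ℝ)) • ((M * dvec S) * (dvec S)ᵀ) := by
  rw [Qmat, Matrix.mul_sub, Matrix.mul_sub, Matrix.mul_one, Matrix.mul_smul,
    Matrix.mul_smul, Matrix.mul_assoc]

lemma Dmat_mul_dvec {m : ℕ} (S : Finset (Fin m)) : Dmat S * dvec S = dvec S := by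
  ext j t
  rw [Dmat, Matrix.diagonal_mul]
  by_cases h : j ∈ S <;> simp [dvec, h]

lemma mul_dvec_apply {a m : ℕ} (S : Finset (Fin m)) (M : Matrix (Fin a) (Fin m) ℝ)
    (i : Fin a) (t : Fin 1) :
    (M * dvec S) i t = ∑ l ∈ S, M i l := by
  rw [Matrix.mul_apply]
  simp [dvec, Finset.sum_ite_mem]

lemma mul_Q_of_D_eq_zero {a m : ℕ} (S : Finset (Fin m)) (α : ℝ) (k : ℕ)
    (M : Matrix (Fin a) (Fin m) ℝ) (h : M * Dmat S = 0) :
    M * Qmat S α k = M := by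
  have hδ : M * dvec S = 0 := by
    calc M * dvec S = M * Dmat S * dvec S := by rw [Matrix.mul_assoc, Dmat_mul_dvec]
    _ = 0 := by rw [h, Matrix.zero_mul]
  rw [mul_Q_eq, h, hδ]
  simp

lemma key {a m k : ℕ} (hk : 0 < k) (S : Finset (Fin m)) (hcard : S.card = k)
    (α : ℝ) (hα0 : 0 < α) (hα1 : α < 2 / 3) (M : Matrix (Fin a) (Fin m) ℝ) :
    norm2 (M * Qmat S α k) ≤ norm2 M - α * (2 - α) * norm2 (M * Dmat S) := by
  have hkR : (0 : ℝ) < (k : ℝ) := by exact_mod_cast hk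
  have row : ∀ i : Fin a,
      ∑ j, ((M * Qmat S α k) i j) ^ 2 ≤
        ∑ j, (M i j) ^ 2 - α * (2 - α) * ∑ j, ((M * Dmat S) i j) ^ 2 := by
    intro i
    set r : ℝ := ∑ l ∈ S, M i l with hr
    have hent : ∀ j, (M * Qmat S α k) i j =
        if j ∈ S then (1 - α) * M i j - α / k * r else M i j := by
      intro j
      rw [mul_Q_eq]
      simp only [Matrix.sub_apply, Matrix.smul_apply, smul_eq_mul, mul_Dmat_apply]
      have hmm : ((M * dvec S) * (dvec S)ᵀ) i j = (M * dvec S) i 0 * (dvec S)ᵀ 0 j := by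
        rw [Matrix.mul_apply, Fin.sum_univ_one]
      rw [hmm, mul_dvec_apply, Matrix.transpose_apply]
      by_cases hj : j ∈ S <;> simp [hj, dvec] <;> ring
    have hL : ∑ j, ((M * Qmat S α k) i j) ^ 2 =
        (∑ j ∈ S, ((1 - α) * M i j - α / k * r) ^ 2) + ∑ j ∈ Sᶜ, (M i j) ^ 2 := by
      rw [← Finset.sum_add_sum_compl S]
      congr 1
      · exact Finset.sum_congr rfl fun j hj => by rw [hent j, if_pos hj]
      · exact Finset.sum_congr rfl fun j hj => by
          rw [hent j, if_neg (Finset.mem_compl.mp hj)]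
    have hR1 : ∑ j, (M i j) ^ 2 = (∑ j ∈ S, (M i j) ^ 2) + ∑ j ∈ Sᶜ, (M i j) ^ 2 :=
      (Finset.sum_add_sum_compl S _).symm
    have hR2 : ∑ j, ((M * Dmat S) i j) ^ 2 = ∑ j ∈ S, (M i j) ^ 2 := by
      rw [← Finset.sum_add_sum_compl S]
      have h1 : ∑ j ∈ S, ((M * Dmat S) i j) ^ 2 = ∑ j ∈ S, (M i j) ^ 2 :=
        Finset.sum_congr rfl fun j hj => by rw [mul_Dmat_apply, if_pos hj]
      have h2 : ∑ j ∈ Sᶜ, ((M * Dmat S) i j) ^ 2 = 0 :=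
        Finset.sum_eq_zero fun j hj => by
          rw [mul_Dmat_apply, if_neg (Finset.mem_compl.mp hj)]; ring
      rw [h1, h2, add_zero]
    have hexp : ∑ j ∈ S, ((1 - α) * M i j - α / k * r) ^ 2 =
        (1 - α) ^ 2 * (∑ j ∈ S, (M i j) ^ 2) - 2 * (1 - α) * (α / k) * r ^ 2
          + (α / k) ^ 2 * k * r ^ 2 := by
      have : ∀ j ∈ S, ((1 - α) * M i j - α / k * r) ^ 2 =
          (1 - α) ^ 2 * (M i j) ^ 2 - 2 * (1 - α) * (α / k) * r * M i j
            + (α / k) ^ 2 * r ^ 2 := fun j _ => by ring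
      rw [Finset.sum_congr rfl this, Finset.sum_add_distrib, Finset.sum_sub_distrib,
        ← Finset.mul_sum, ← Finset.mul_sum, ← hr, Finset.sum_const, hcard,
        nsmul_eq_mul]
      ring
    rw [hL, hR1, hR2, hexp]
    have hck : α / k * k = α := div_mul_cancel₀ α (ne_of_gt hkR)
    have hr2 : (0 : ℝ) ≤ r ^ 2 := sq_nonneg r
    have hd : (0 : ℝ) ≤ ∑ j ∈ S, (M i j) ^ 2 :=
      Finset.sum_nonneg fun j _ => sq_nonneg _
    have hcpos : (0 : ℝ) < α / k := div_pos hα0 hkR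
    nlinarith [mul_nonneg (le_of_lt hcpos) hr2, sq_nonneg (1 - α)]
  unfold norm2
  calc ∑ i, ∑ j, ((M * Qmat S α k) i j) ^ 2
      ≤ ∑ i, (∑ j, (M i j) ^ 2 - α * (2 - α) * ∑ j, ((M * Dmat S) i j) ^ 2) :=
        Finset.sum_le_sum fun i _ => row i
    _ = _ := by rw [Finset.sum_sub_distrib, ← Finset.mul_sum]

lemma norm2_mul_Q_le {a m k : ℕ} (hk : 0 < k) (S : Finset (Fin m)) (hcard : S.card = k)
    (α : ℝ) (hα0 : 0 < α) (hα1 : α < 2 / 3) (M : Matrix (Fin a) (Fin m) ℝ) :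
    norm2 (M * Qmat S α k) ≤ norm2 M := by
  have h := key hk S hcard α hα0 hα1 M
  have h2 : 0 ≤ α * (2 - α) * norm2 (M * Dmat S) :=
    mul_nonneg (mul_nonneg hα0.le (by linarith)) (norm2_nonneg _)
  linarith

lemma main_list {a m k : ℕ} (hk : 0 < k) (α : ℝ) (hα0 : 0 < α) (hα1 : α < 2 / 3)
    (L : List (Finset (Fin m))) (hL : ∀ s ∈ L, s.card = k)
    (M : Matrix (Fin a) (Fin m) ℝ) :
    norm2 (M * (L.map fun s => Qmat s α k).prod) < norm2 M ∨
      (M * (L.map fun s => Qmat s α k).prod = M ∧ ∀ s ∈ L, M * Dmat s = 0) := by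
  induction L generalizing M with
  | nil => right; simp
  | cons s L ih =>
    have hs : s.card = k := hL s (by simp)
    have hL' : ∀ t ∈ L, t.card = k := fun t ht => hL t (by simp [ht])
    have hprod : M * ((s :: L).map fun u => Qmat u α k).prod =
        (M * Qmat s α k) * (L.map fun u => Qmat u α k).prod := by
      simp [Matrix.mul_assoc]
    by_cases hD : M * Dmat s = 0
    · have hfix : M * Qmat s α k = M := mul_Q_of_D_eq_zero s α k M hD
      rcases ih hL' M with h | ⟨heq, hall⟩
      · left; rw [hprod, hfix]; exact h
      · right
        constructor
        · rw [hprod, hfix]; exact heq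
        · intro t ht
          rcases List.mem_cons.mp ht with rfl | ht'
          · exact hD
          · exact hall t ht'
    · left
      have hDpos : 0 < norm2 (M * Dmat s) := norm2_pos _ hD
      have h1 : norm2 (M * Qmat s α k) < norm2 M := by
        have h := key hk s hs α hα0 hα1 M
        have h2 : 0 < α * (2 - α) * norm2 (M * Dmat s) :=
          mul_pos (mul_pos hα0 (by linarith)) hDpos
        linarith
      have h2 : norm2 ((M * Qmat s α k) * (L.map fun u => Qmat u α k).prod) ≤
          norm2 (M * Qmat s α k) := by
        rcases ih hL' (M * Qmat s α k) with h | ⟨heq, _⟩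
        · exact le_of_lt h
        · rw [heq]
      rw [hprod]
      exact lt_of_le_of_lt h2 h1

theorem stmt_5 (n m k b : ℕ) (hn : 0 < n) (hk : 0 < k)
    (α : ℝ) (hα0 : 0 < α) (hα1 : α < 2 / 3)
    (S : Fin b → Finset (Fin m)) (hcard : ∀ i, (S i).card = k)
    (hunion : ∀ j : Fin m, ∃ i, j ∈ S i)
    (M' : Matrix (Fin n) (Fin m) ℝ) (hM' : M' ≠ 0) (hV : Jbar n * M' = 0) :
    frob (M' * (List.ofFn fun i => Qmat (S i) α k).prod) < frob M' := by
  have hofn : (List.ofFn fun i => Qmat (S i) α k) =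
      (List.ofFn S).map fun s => Qmat s α k := by
    rw [List.map_ofFn]; rfl
  have hL : ∀ s ∈ List.ofFn S, s.card = k := by
    intro s hs
    rcases List.mem_ofFn.mp hs with ⟨i, rfl⟩
    exact hcard i
  rcases main_list hk α hα0 hα1 (List.ofFn S) hL M' with h | ⟨_, hall⟩
  · rw [frob_eq, frob_eq, hofn]
    exact Real.sqrt_lt_sqrt (norm2_nonneg _) h
  · exfalso; apply hM'
    ext i j
    rcases hunion j with ⟨t, ht⟩
    have h0 : M' * Dmat (S t) = 0 := hall (S t) (List.mem_ofFn.mpr ⟨t, rfl⟩)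
    have := congrFun (congrFun h0 i) j
    rw [mul_Dmat_apply, if_pos ht] at this
    simpa using this
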